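/- arXiv:math/9904089 — 2 statements merged into one kernel-verified Lean document; each statement's English description precedes it below -/
import Mathlib

section
/- For every n with 2 ≤ n, let r : BP_n → GL_n(ℤ[t,t⁻¹]) be the group homomorphism with r(σ_i) = B_i and r(ξ_i) = P_i, and let BuP_n denote its range. Then the abelianization of BuP_n is isomorphic to ℤ/2 × ℤ. -/
open scoped MatrixGroups

namespace VirtualBraids

/-- The free-group generator corresponding to the braid-permutation generator `σ_{i+1}`. -/
def bsf {n : ℕ} (i : Fin (n - 1)) : FreeGroup (Fin (n - 1) ⊕ Fin (n - 1)) :=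
  FreeGroup.of (Sum.inl i)

/-- The free-group generator corresponding to the braid-permutation generator `ξ_{i+1}`. -/
def bxf {n : ℕ} (i : Fin (n - 1)) : FreeGroup (Fin (n - 1) ⊕ Fin (n - 1)) :=
  FreeGroup.of (Sum.inr i)

/-- The relators of the braid-permutation group `BP n` (generators are `0`-indexed:
index `i : Fin (n-1)` corresponds to the classical `σ_{i+1}`, `ξ_{i+1}`). -/
def bpRels (n : ℕ) : Set (FreeGroup (Fin (n - 1) ⊕ Fin (n - 1))) :=
  { r |
    (∃ i : Fin (n - 1), r = bxf i * bxf i) ∨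
    (∃ i j : Fin (n - 1), ((i : ℕ) + 1 < (j : ℕ) ∨ (j : ℕ) + 1 < (i : ℕ)) ∧
      r = bxf i * bxf j * (bxf i)⁻¹ * (bxf j)⁻¹) ∨
    (∃ i j : Fin (n - 1), (j : ℕ) = (i : ℕ) + 1 ∧
      r = bxf i * bxf j * bxf i * (bxf j * bxf i * bxf j)⁻¹) ∨
    (∃ i j : Fin (n - 1), ((i : ℕ) + 1 < (j : ℕ) ∨ (j : ℕ) + 1 < (i : ℕ)) ∧
      r = bsf i * bsf j * (bsf i)⁻¹ * (bsf j)⁻¹) ∨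
    (∃ i j : Fin (n - 1), (j : ℕ) = (i : ℕ) + 1 ∧
      r = bsf i * bsf j * bsf i * (bsf j * bsf i * bsf j)⁻¹) ∨
    (∃ i j : Fin (n - 1), ((i : ℕ) + 1 < (j : ℕ) ∨ (j : ℕ) + 1 < (i : ℕ)) ∧
      r = bsf i * bxf j * (bsf i)⁻¹ * (bxf j)⁻¹) ∨
    (∃ i j : Fin (n - 1), (j : ℕ) = (i : ℕ) + 1 ∧
      r = bxf i * bxf j * bsf i * (bsf j * bxf i * bxf j)⁻¹) ∨
    (∃ i j : Fin (n - 1), (j : ℕ) = (i : ℕ) + 1 ∧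
      r = bsf i * bsf j * bxf i * (bxf j * bsf i * bsf j)⁻¹) }

/-- The braid-permutation group on `n` strings. -/
abbrev BP (n : ℕ) := PresentedGroup (bpRels n)

/-- The generator `σ_{i+1}` of `BP n`. -/
def bσ (n : ℕ) (i : Fin (n - 1)) : BP n := PresentedGroup.of (Sum.inl i)

/-- The generator `ξ_{i+1}` of `BP n`. -/
def bξ (n : ℕ) (i : Fin (n - 1)) : BP n := PresentedGroup.of (Sum.inr i)

/-- The Burau matrix `B_{i+1}`: the block-diagonal matrix
`diag(E_i, [[1-t, t], [1, 0]], E_{n-i-2})` over `ℤ[t,t⁻¹]`. -/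
noncomputable def Bmat (n : ℕ) (i : Fin (n - 1)) :
    Matrix (Fin n) (Fin n) (LaurentPolynomial ℤ) :=
  Matrix.of fun k l =>
    if (k : ℕ) = (i : ℕ) ∧ (l : ℕ) = (i : ℕ) then 1 - LaurentPolynomial.T 1
    else if (k : ℕ) = (i : ℕ) ∧ (l : ℕ) = (i : ℕ) + 1 then LaurentPolynomial.T 1
    else if (k : ℕ) = (i : ℕ) + 1 ∧ (l : ℕ) = (i : ℕ) then 1
    else if (k : ℕ) = (i : ℕ) + 1 ∧ (l : ℕ) = (i : ℕ) + 1 then 0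
    else if (k : ℕ) = (l : ℕ) then 1 else 0

/-- The permutation matrix `P_{i+1}`: the block-diagonal matrix
`diag(E_i, [[0, 1], [1, 0]], E_{n-i-2})` over `ℤ[t,t⁻¹]`. -/
noncomputable def Pmat (n : ℕ) (i : Fin (n - 1)) :
    Matrix (Fin n) (Fin n) (LaurentPolynomial ℤ) :=
  Matrix.of fun k l =>
    if (k : ℕ) = (i : ℕ) ∧ (l : ℕ) = (i : ℕ) then 0
    else if (k : ℕ) = (i : ℕ) ∧ (l : ℕ) = (i : ℕ) + 1 then 1
    else if (k : ℕ) = (i : ℕ) + 1 ∧ (l : ℕ) = (i : ℕ) then 1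
    else if (k : ℕ) = (i : ℕ) + 1 ∧ (l : ℕ) = (i : ℕ) + 1 then 0
    else if (k : ℕ) = (l : ℕ) then 1 else 0

end VirtualBraids

/-! In an abelian quotient of `BP n` the mixed braid relations identify all `σ_i` with one
class `s` and all `ξ_i` with one class `x` of order dividing 2, so the abelianization of the
image `BuP n` is a quotient of `ℤ/2 × ℤ` via `(a, z) ↦ x ^ a * s ^ z`. This quotient map is
injective: the determinant evaluated at `t = -2` sends `x` to `det P_1 = -1` and `s` to
`det B_1 = -t = 2`, and `(a, z) ↦ (-1) ^ a * 2 ^ z` is injective on `ℤ/2 × ℤ`. -/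

namespace Matrix

theorem det_eq_det_submatrix_castAdd {R : Type*} [CommRing R] {m k : ℕ}
    (M : Matrix (Fin (m + k)) (Fin (m + k)) R)
    (h₂₁ : ∀ a b, M (Fin.natAdd m a) (Fin.castAdd k b) = 0)
    (h₂₂ : ∀ a b, M (Fin.natAdd m a) (Fin.natAdd m b) = (1 : Matrix (Fin k) (Fin k) R) a b) :
    M.det = (M.submatrix (Fin.castAdd k) (Fin.castAdd k)).det := by
  let N := reindex finSumFinEquiv.symm finSumFinEquiv.symm M
  have hN₂₁ : N.toBlocks₂₁ = 0 := Matrix.ext h₂₁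
  have hN₂₂ : N.toBlocks₂₂ = 1 := Matrix.ext h₂₂
  rw [← det_reindex_self finSumFinEquiv.symm M]
  change N.det = _
  rw [← fromBlocks_toBlocks N, hN₂₁, hN₂₂, det_fromBlocks_zero₂₁, det_one, mul_one]
  rfl

end Matrix

theorem Fin.apply_eq_apply_of_forall_succ {α : Type*} {m : ℕ} (g : Fin m → α)
    (h : ∀ i j : Fin m, (j : ℕ) = i + 1 → g i = g j) (i j : Fin m) : g i = g j := by
  suffices key : ∀ (a : ℕ) (ha : a < m), g ⟨a, ha⟩ = g ⟨0, by omega⟩ from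
    (key i i.2).trans (key j j.2).symm
  intro a
  induction a with
  | zero => intro _; rfl
  | succ a ih => intro ha; exact (h ⟨a, by omega⟩ ⟨a + 1, ha⟩ rfl).symm.trans (ih _)

def liftZModTwoProdInt {A : Type*} [CommGroup A] (x s : A) (hx : x ^ 2 = 1) :
    Multiplicative (ZMod 2 × ℤ) →* A :=
  MonoidHom.mk' (fun m => x ^ m.toAdd.1.val * s ^ m.toAdd.2) fun a b => by
    rw [toAdd_mul, Prod.fst_add, Prod.snd_add, ZMod.val_add, ← pow_eq_pow_mod _ hx, pow_add,
      zpow_add, mul_mul_mul_comm]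

theorem liftZModTwoProdInt_ofAdd {A : Type*} [CommGroup A] (x s : A) (hx : x ^ 2 = 1)
    (a : ZMod 2) (z : ℤ) : liftZModTwoProdInt x s hx (.ofAdd (a, z)) = x ^ a.val * s ^ z := rfl

theorem MonoidHom.comp_liftZModTwoProdInt {A B : Type*} [CommGroup A] [CommGroup B] (f : A →* B)
    (x s : A) (hx : x ^ 2 = 1) :
    f.comp (liftZModTwoProdInt x s hx) =
      liftZModTwoProdInt (f x) (f s) (by rw [← map_pow, hx, map_one]) :=
  MonoidHom.ext fun _ => by simp [liftZModTwoProdInt]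

theorem liftZModTwoProdInt_neg_one_injective {K : Type*} [Field K] [LinearOrder K]
    [IsStrictOrderedRing K] (s : Kˣ) (hs₀ : 0 < (s : K)) (hs₁ : (s : K) ≠ 1) :
    Function.Injective (liftZModTwoProdInt (-1) s (by simp)) := by
  rw [injective_iff_map_eq_one]
  rintro ⟨a, z⟩ h
  change (-1) ^ a.val * s ^ z = 1 at h
  have h' : (-1 : K) ^ a.val * (s : K) ^ z = 1 := by
    simpa using congrArg Units.val h
  have hz : z = 0 := by
    have := congrArg abs h'
    rwa [abs_mul, abs_pow, abs_neg, abs_one, one_pow, one_mul, abs_zpow, abs_of_pos hs₀,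
      zpow_eq_one_iff_right₀ hs₀.le hs₁] at this
  have ha : a = 0 := by
    rw [← ZMod.natCast_zmod_val a, ZMod.natCast_eq_zero_iff_even]
    exact (neg_one_pow_eq_one_iff_even (neg_one_lt_zero.trans one_pos).ne).mp
      (by simpa [hz] using h')
  rw [ha, hz]
  rfl

namespace VirtualBraids

open LaurentPolynomial Matrix

theorem det_Bmat_zero (k : ℕ) : (Bmat (2 + k) ⟨0, by omega⟩).det = -T 1 := by
  rw [det_eq_det_submatrix_castAdd] <;>
    simp only [Bmat, of_apply, submatrix_apply, det_fin_two, Fin.val_castAdd, Fin.val_natAdd,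
      Fin.val_zero, Fin.val_one, one_apply, Fin.ext_iff]
  · simp
  all_goals intros; split_ifs <;> first | rfl | omega

theorem det_Pmat_zero (k : ℕ) : (Pmat (2 + k) ⟨0, by omega⟩).det = -1 := by
  rw [det_eq_det_submatrix_castAdd] <;>
    simp only [Pmat, of_apply, submatrix_apply, det_fin_two, Fin.val_castAdd, Fin.val_natAdd,
      Fin.val_zero, Fin.val_one, one_apply, Fin.ext_iff]
  · simp
  all_goals intros; split_ifs <;> first | rfl | omega

variable {n : ℕ}

theorem bξ_mul_self (i : Fin (n - 1)) : bξ n i * bξ n i = 1 :=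
  PresentedGroup.one_of_mem (Or.inl ⟨i, rfl⟩)

theorem bξ_mul_bξ_mul_bξ {i j : Fin (n - 1)} (h : (j : ℕ) = i + 1) :
    bξ n i * bξ n j * bξ n i = bξ n j * bξ n i * bξ n j :=
  PresentedGroup.mk_eq_mk_of_mul_inv_mem (Or.inr (Or.inr (Or.inl ⟨i, j, h, rfl⟩)))

theorem bξ_mul_bξ_mul_bσ {i j : Fin (n - 1)} (h : (j : ℕ) = i + 1) :
    bξ n i * bξ n j * bσ n i = bσ n j * bξ n i * bξ n j :=
  PresentedGroup.mk_eq_mk_of_mul_inv_mem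
    (Or.inr (Or.inr (Or.inr (Or.inr (Or.inr (Or.inr (Or.inl ⟨i, j, h, rfl⟩)))))))

section CommGroup

variable {A : Type*} [CommGroup A]

theorem map_bξ_eq_and_map_bσ_eq_of_succ (f : BP n →* A) {i j : Fin (n - 1)}
    (h : (j : ℕ) = i + 1) : f (bξ n i) = f (bξ n j) ∧ f (bσ n i) = f (bσ n j) := by
  have hξ := congrArg f (bξ_mul_bξ_mul_bξ h)
  have hσ := congrArg f (bξ_mul_bξ_mul_bσ h)
  simp only [map_mul] at hξ hσ
  exact ⟨mul_left_cancel (hξ.trans (mul_rotate _ _ _)),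
    mul_left_cancel (hσ.trans (mul_rotate _ _ _))⟩

theorem map_bξ_eq (f : BP n →* A) (i j : Fin (n - 1)) : f (bξ n i) = f (bξ n j) :=
  Fin.apply_eq_apply_of_forall_succ _
    (fun _ _ h => (map_bξ_eq_and_map_bσ_eq_of_succ f h).1) i j

theorem map_bσ_eq (f : BP n →* A) (i j : Fin (n - 1)) : f (bσ n i) = f (bσ n j) :=
  Fin.apply_eq_apply_of_forall_succ _
    (fun _ _ h => (map_bξ_eq_and_map_bσ_eq_of_succ f h).2) i j

theorem surjective_liftZModTwoProdInt {f : BP n →* A} (hf : Function.Surjective f)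
    (i : Fin (n - 1)) :
    Function.Surjective (liftZModTwoProdInt (f (bξ n i)) (f (bσ n i))
      (by rw [← map_pow, sq, bξ_mul_self, map_one])) := by
  intro y
  obtain ⟨g, rfl⟩ := hf y
  refine PresentedGroup.generated_by _ ((MonoidHom.range _).comap f) (fun j => ?_) g
  rcases j with j | j
  · refine ⟨.ofAdd (0, 1), ?_⟩
    rw [liftZModTwoProdInt_ofAdd, ZMod.val_zero, pow_zero, one_mul, zpow_one]
    exact map_bσ_eq f i j
  · refine ⟨.ofAdd (1, 0), ?_⟩
    rw [liftZModTwoProdInt_ofAdd, ZMod.val_one, pow_one, zpow_zero, mul_one]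
    exact map_bξ_eq f i j

end CommGroup

/-- For `n ≥ 2`, if `r : BP n → GL_n(ℤ[t,t⁻¹])` is the (Burau)
homomorphism with `r(σ_i) = B_i` and `r(ξ_i) = P_i`, and `BuP n` is its range, then
the abelianization of `BuP n` is isomorphic to `ℤ/2 × ℤ`. -/
theorem abelianization_BuP (n : ℕ) (hn : 2 ≤ n) :
    ∀ r : BP n →* GL (Fin n) (LaurentPolynomial ℤ),
      (∀ i : Fin (n - 1),
        ((r (bσ n i) : Matrix (Fin n) (Fin n) (LaurentPolynomial ℤ)) = Bmat n i) ∧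
        ((r (bξ n i) : Matrix (Fin n) (Fin n) (LaurentPolynomial ℤ)) = Pmat n i)) →
      Nonempty (Abelianization ↥r.range ≃* Multiplicative (ZMod 2 × ℤ)) := by
  intro r hr
  obtain ⟨k, rfl⟩ := Nat.exists_eq_add_of_le hn
  let i₀ : Fin (2 + k - 1) := ⟨0, by omega⟩
  let two : ℚˣ := Units.mk0 2 two_ne_zero
  let ρ : BP (2 + k) →* Abelianization r.range := Abelianization.of.comp r.rangeRestrict
  have hρ : Function.Surjective ρ :=
    (QuotientGroup.mk_surjective).comp r.rangeRestrict_surjective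
  let d : Abelianization r.range →* ℚˣ := Abelianization.lift <|
    (Units.map (eval₂ (Int.castRingHom ℚ) (-two)).toMonoidHom).comp
      (GeneralLinearGroup.det.comp r.range.subtype)
  have hd : ∀ g, (d (ρ g) : ℚ) =
      eval₂ (Int.castRingHom ℚ) (-two) (r g : Matrix (Fin (2 + k)) (Fin (2 + k)) _).det := by
    intro g
    simp only [d, ρ, MonoidHom.comp_apply, Abelianization.lift_apply_of]
    rfl
  have hdξ : d (ρ (bξ _ i₀)) = -1 := Units.ext <| by
    rw [hd, (hr i₀).2, det_Pmat_zero]; simp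
  have hdσ : d (ρ (bσ _ i₀)) = two := Units.ext <| by
    rw [hd, (hr i₀).1, det_Bmat_zero]; simp [two]
  let u := liftZModTwoProdInt (ρ (bξ _ i₀)) (ρ (bσ _ i₀))
    (by rw [← map_pow, sq, bξ_mul_self, map_one])
  have hu : Function.Injective (d ∘ u) := by
    rw [← MonoidHom.coe_comp, MonoidHom.comp_liftZModTwoProdInt]
    simp only [hdξ, hdσ]
    exact liftZModTwoProdInt_neg_one_injective two (by simp [two]) (by simp [two])
  exact ⟨(MulEquiv.ofBijective u ⟨hu.of_comp, surjective_liftZModTwoProdInt hρ i₀⟩).symm⟩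

end VirtualBraids
end

section
/- For every n ≥ 1 there exists a group homomorphism VB_n → Aut(F_n) sending, for each 1 ≤ i ≤ n−1, the generator ζ_i to the automorphism ξ_i of F_n defined by x_i ↦ x_{i+1}, x_{i+1} ↦ x_i, x_j ↦ x_j for j ≠ i, i+1, and the generator σ_i to the automorphism of F_n defined by x_i ↦ x_{i+1}, x_{i+1} ↦ x_{i+1}⁻¹ x_i x_{i+1}, x_j ↦ x_j for j ≠ i, i+1; in particular these automorphisms of the free group satisfy all the defining relations of VB_n. -/
namespace VirtualBraids

/-- The free-group generator corresponding to the virtual braid generator `σ_{i+1}`. -/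
def sf {n : ℕ} (i : Fin (n - 1)) : FreeGroup (Fin (n - 1) ⊕ Fin (n - 1)) :=
  FreeGroup.of (Sum.inl i)

/-- The free-group generator corresponding to the virtual braid generator `ζ_{i+1}`. -/
def zf {n : ℕ} (i : Fin (n - 1)) : FreeGroup (Fin (n - 1) ⊕ Fin (n - 1)) :=
  FreeGroup.of (Sum.inr i)

/-- The relators of the virtual braid group `VB n` (generators are `0`-indexed:
index `i : Fin (n-1)` corresponds to the classical `σ_{i+1}`, `ζ_{i+1}`). -/
def vbRels (n : ℕ) : Set (FreeGroup (Fin (n - 1) ⊕ Fin (n - 1))) :=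
  { r |
    (∃ i : Fin (n - 1), r = zf i * zf i) ∨
    (∃ i j : Fin (n - 1), ((i : ℕ) + 1 < (j : ℕ) ∨ (j : ℕ) + 1 < (i : ℕ)) ∧
      r = zf i * zf j * (zf i)⁻¹ * (zf j)⁻¹) ∨
    (∃ i j : Fin (n - 1), (j : ℕ) = (i : ℕ) + 1 ∧
      r = zf i * zf j * zf i * (zf j * zf i * zf j)⁻¹) ∨
    (∃ i j : Fin (n - 1), ((i : ℕ) + 1 < (j : ℕ) ∨ (j : ℕ) + 1 < (i : ℕ)) ∧
      r = sf i * sf j * (sf i)⁻¹ * (sf j)⁻¹) ∨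
    (∃ i j : Fin (n - 1), (j : ℕ) = (i : ℕ) + 1 ∧
      r = sf i * sf j * sf i * (sf j * sf i * sf j)⁻¹) ∨
    (∃ i j : Fin (n - 1), ((i : ℕ) + 1 < (j : ℕ) ∨ (j : ℕ) + 1 < (i : ℕ)) ∧
      r = sf i * zf j * (sf i)⁻¹ * (zf j)⁻¹) ∨
    (∃ i j : Fin (n - 1), (j : ℕ) = (i : ℕ) + 1 ∧
      r = zf i * zf j * sf i * (sf j * zf i * zf j)⁻¹) }

/-- The virtual braid group on `n` strings. -/
abbrev VB (n : ℕ) := PresentedGroup (vbRels n)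

/-- The generator `σ_{i+1}` of `VB n`. -/
def vσ (n : ℕ) (i : Fin (n - 1)) : VB n := PresentedGroup.of (Sum.inl i)

/-- The generator `ζ_{i+1}` of `VB n`. -/
def vζ (n : ℕ) (i : Fin (n - 1)) : VB n := PresentedGroup.of (Sum.inr i)

/-- The element `i` of `Fin n`, for `i : Fin (n-1)`; it is the first letter moved by
the transposition corresponding to the `i`-th generator. -/
def finL {n : ℕ} (i : Fin (n - 1)) : Fin n := ⟨(i : ℕ), by have := i.isLt; omega⟩

/-- The element `i + 1` of `Fin n`, for `i : Fin (n-1)`; it is the second letter moved by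
the transposition corresponding to the `i`-th generator. -/
def finR {n : ℕ} (i : Fin (n - 1)) : Fin n := ⟨(i : ℕ) + 1, by have := i.isLt; omega⟩

end VirtualBraids

/-!
The generators `ζ_i` act through the permutation action of `Equiv.Perm (Fin n)` on `F_n`, so
their relations are those of the adjacent transpositions. The generators `σ_i` act by Artin's
automorphisms `σ_{a,b} : x_a ↦ x_b, x_b ↦ x_b⁻¹ x_a x_b`; relabelling generators by a permutation
`π` conjugates `σ_{a,b}` into `σ_{π a, π b}`, which yields both mixed relations. The commutation
and braid relations among the `σ_{a,b}` themselves are checked on the generators of `F_n`.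
-/

namespace FreeGroup

open Equiv

variable {α : Type*}

def permAut : Perm α →* MulAut (FreeGroup α) where
  toFun := freeGroupCongr
  map_one' := freeGroupCongr_refl
  map_mul' e f := (freeGroupCongr_trans f e).symm

@[simp]
lemma permAut_apply_of (π : Perm α) (k : α) : permAut π (of k) = of (π k) := rfl

lemma mulEquiv_ext {G : Type*} [Group G] {f g : FreeGroup α ≃* G}
    (h : ∀ k, f (of k) = g (of k)) : f = g :=
  MulEquiv.toMonoidHom_injective (ext_hom _ _ h)

variable [DecidableEq α]

def artinImage (a b k : α) : FreeGroup α :=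
  if k = a then of b else if k = b then (of b)⁻¹ * of a * of b else of k

-- Testing `k = b` first makes this the inverse of `artinImage a b` even when `a = b`.
def artinPreimage (a b k : α) : FreeGroup α :=
  if k = b then of a else if k = a then of a * of b * (of a)⁻¹ else of k

lemma lift_artinPreimage_comp_lift_artinImage (a b : α) :
    (lift (artinPreimage a b)).comp (lift (artinImage a b)) = .id _ := by
  ext k
  rcases eq_or_ne k a with rfl | hka
  · simp [artinImage, artinPreimage]
  rcases eq_or_ne k b with rfl | hkb
  · simp [artinImage, artinPreimage, hka, hka.symm]
    group
  · simp [artinImage, artinPreimage, hka, hkb]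

lemma lift_artinImage_comp_lift_artinPreimage (a b : α) :
    (lift (artinImage a b)).comp (lift (artinPreimage a b)) = .id _ := by
  ext k
  rcases eq_or_ne k b with rfl | hkb
  · simp [artinImage, artinPreimage]
  rcases eq_or_ne k a with rfl | hka
  · simp [artinImage, artinPreimage, hkb, hkb.symm]
    group
  · simp [artinImage, artinPreimage, hka, hkb]

def artinAut (a b : α) : MulAut (FreeGroup α) :=
  MonoidHom.toMulEquiv _ _ (lift_artinPreimage_comp_lift_artinImage a b)
    (lift_artinImage_comp_lift_artinPreimage a b)

lemma artinAut_apply_of (a b k : α) : artinAut a b (of k) = artinImage a b k := lift_apply_of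

@[simp]
lemma artinAut_apply_of_left (a b : α) : artinAut a b (of a) = of b := by
  simp [artinAut_apply_of, artinImage]

lemma artinAut_apply_of_right {a b : α} (h : a ≠ b) :
    artinAut a b (of b) = (of b)⁻¹ * of a * of b := by
  simp [artinAut_apply_of, artinImage, h.symm]

lemma artinAut_apply_of_of_ne {a b k : α} (ha : k ≠ a) (hb : k ≠ b) :
    artinAut a b (of k) = of k := by
  simp [artinAut_apply_of, artinImage, ha, hb]

lemma permAut_mul_artinAut (π : Perm α) (a b : α) :
    permAut π * artinAut a b = artinAut (π a) (π b) * permAut π := by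
  refine mulEquiv_ext fun k => ?_
  simp [artinAut_apply_of, artinImage, apply_ite (permAut π), π.injective.eq_iff]

lemma commute_artinAut_permAut_swap {a b c d : α} (hac : a ≠ c) (had : a ≠ d) (hbc : b ≠ c)
    (hbd : b ≠ d) : Commute (artinAut a b) (permAut (swap c d)) := by
  have h := permAut_mul_artinAut (swap c d) a b
  rwa [swap_apply_of_ne_of_ne hac had, swap_apply_of_ne_of_ne hbc hbd, eq_comm] at h

lemma permAut_swap_mul_swap_mul_artinAut {a b c : α} (hab : a ≠ b) (hbc : b ≠ c) (hac : a ≠ c) :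
    permAut (swap a b * swap b c) * artinAut a b = artinAut b c * permAut (swap a b * swap b c) := by
  rw [permAut_mul_artinAut]
  simp [swap_apply_def, hab, hac, hbc.symm, hac.symm]

lemma commute_artinAut {a b c d : α} (hac : a ≠ c) (had : a ≠ d) (hbc : b ≠ c) (hbd : b ≠ d) :
    Commute (artinAut a b) (artinAut c d) := by
  refine mulEquiv_ext fun k => ?_
  simp only [MulAut.mul_apply, artinAut_apply_of, artinImage]
  split_ifs <;> simp [artinAut_apply_of, artinImage, *] <;> grind

lemma artinAut_braid {a b c : α} (hab : a ≠ b) (hbc : b ≠ c) (hac : a ≠ c) :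
    artinAut a b * artinAut b c * artinAut a b = artinAut b c * artinAut a b * artinAut b c := by
  refine mulEquiv_ext fun k => ?_
  have hba := hab.symm
  have hcb := hbc.symm
  have hca := hac.symm
  rcases eq_or_ne k a with rfl | hka
  · simp [artinAut_apply_of, artinImage, *]
  rcases eq_or_ne k b with rfl | hkb
  · simp [artinAut_apply_of, artinImage, *]
  rcases eq_or_ne k c with rfl | hkc
  · simp [artinAut_apply_of, artinImage, *]
    group
  · simp [artinAut_apply_of, artinImage, *]

end FreeGroup

namespace Equiv

lemma swap_braid {α : Type*} [DecidableEq α] {a b c : α} (hab : a ≠ b) (hbc : b ≠ c)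
    (hac : a ≠ c) : swap a b * swap b c * swap a b = swap b c * swap a b * swap b c := by
  ext k
  simp only [Perm.mul_apply, swap_apply_def]
  grind

end Equiv

namespace VirtualBraids

open FreeGroup (lift lift_apply_of permAut artinAut)
open Equiv

variable {n : ℕ}

lemma finL_ne_finR (i : Fin (n - 1)) : finL i ≠ finR i := by
  simp [Fin.ext_iff, finL, finR]

lemma finL_eq_finR_of_succ {i j : Fin (n - 1)} (h : (j : ℕ) = i + 1) : finL j = finR i :=
  Fin.ext h

lemma finL_finR_ne_of_succ {i j : Fin (n - 1)} (h : (j : ℕ) = i + 1) :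
    finL i ≠ finR i ∧ finR i ≠ finR j ∧ finL i ≠ finR j := by
  simp only [ne_eq, Fin.ext_iff, finL, finR]
  omega

lemma finL_finR_ne_of_far {i j : Fin (n - 1)} (h : (i : ℕ) + 1 < j ∨ (j : ℕ) + 1 < i) :
    finL i ≠ finL j ∧ finL i ≠ finR j ∧ finR i ≠ finL j ∧ finR i ≠ finR j := by
  simp only [ne_eq, Fin.ext_iff, finL, finR]
  omega

def genAut (n : ℕ) : Fin (n - 1) ⊕ Fin (n - 1) → MulAut (FreeGroup (Fin n)) :=
  Sum.elim (fun i => artinAut (finL i) (finR i)) (fun i => permAut (swap (finL i) (finR i)))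

lemma lift_genAut_eq_one : ∀ r ∈ vbRels n, lift (genAut n) r = 1 := by
  rintro r (⟨i, rfl⟩ | ⟨i, j, hij, rfl⟩ | ⟨i, j, hij, rfl⟩ | ⟨i, j, hij, rfl⟩ |
    ⟨i, j, hij, rfl⟩ | ⟨i, j, hij, rfl⟩ | ⟨i, j, hij, rfl⟩) <;>
    simp only [sf, zf, ← commutatorElement_def, map_commutatorElement, map_mul, map_inv,
      lift_apply_of, genAut, Sum.elim_inl, Sum.elim_inr, commutatorElement_eq_one_iff_commute,
      mul_inv_eq_one]
  · rw [← map_mul, swap_mul_self, map_one]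
  · obtain ⟨h₁, h₂, h₃, h₄⟩ := finL_finR_ne_of_far hij
    have : [finL i, finR i, finL j, finR j].Nodup := by simp [*, finL_ne_finR]
    exact (Perm.disjoint_swap_swap this).commute.map permAut
  · obtain ⟨h₁, h₂, h₃⟩ := finL_finR_ne_of_succ hij
    simp only [← map_mul, finL_eq_finR_of_succ hij, swap_braid h₁ h₂ h₃]
  · obtain ⟨h₁, h₂, h₃, h₄⟩ := finL_finR_ne_of_far hij
    exact FreeGroup.commute_artinAut h₁ h₂ h₃ h₄
  · obtain ⟨h₁, h₂, h₃⟩ := finL_finR_ne_of_succ hij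
    rw [finL_eq_finR_of_succ hij]
    exact FreeGroup.artinAut_braid h₁ h₂ h₃
  · obtain ⟨h₁, h₂, h₃, h₄⟩ := finL_finR_ne_of_far hij
    exact FreeGroup.commute_artinAut_permAut_swap h₁ h₂ h₃ h₄
  · obtain ⟨h₁, h₂, h₃⟩ := finL_finR_ne_of_succ hij
    rw [mul_assoc (artinAut _ _), ← map_mul, finL_eq_finR_of_succ hij]
    exact FreeGroup.permAut_swap_mul_swap_mul_artinAut h₁ h₂ h₃

theorem exists_rep_aut_free_general (n : ℕ) :
    ∃ Φ : VB n →* MulAut (FreeGroup (Fin n)),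
      ∀ i : Fin (n - 1),
        (Φ (vζ n i) (FreeGroup.of (finL i)) = FreeGroup.of (finR i) ∧
         Φ (vζ n i) (FreeGroup.of (finR i)) = FreeGroup.of (finL i) ∧
         ∀ j : Fin n, j ≠ finL i → j ≠ finR i →
           Φ (vζ n i) (FreeGroup.of j) = FreeGroup.of j) ∧
        (Φ (vσ n i) (FreeGroup.of (finL i)) = FreeGroup.of (finR i) ∧
         Φ (vσ n i) (FreeGroup.of (finR i)) =
           (FreeGroup.of (finR i))⁻¹ * FreeGroup.of (finL i) * FreeGroup.of (finR i) ∧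
         ∀ j : Fin n, j ≠ finL i → j ≠ finR i →
           Φ (vσ n i) (FreeGroup.of j) = FreeGroup.of j) := by
  refine ⟨PresentedGroup.toGroup lift_genAut_eq_one, fun i => ?_⟩
  simp only [vζ, vσ, PresentedGroup.toGroup.of, genAut, Sum.elim_inl, Sum.elim_inr]
  refine ⟨⟨by simp, by simp, fun k hkL hkR => ?_⟩,
    ⟨FreeGroup.artinAut_apply_of_left _ _, FreeGroup.artinAut_apply_of_right (finL_ne_finR i),
      fun k hkL hkR => FreeGroup.artinAut_apply_of_of_ne hkL hkR⟩⟩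
  simp [swap_apply_of_ne_of_ne hkL hkR]

/-- For every `n ≥ 1` there is a group homomorphism
`VB n → Aut(F_n)` sending `ζ_i` to the automorphism exchanging `x_i` and `x_{i+1}`
(and fixing the other generators), and `σ_i` to the automorphism
`x_i ↦ x_{i+1}`, `x_{i+1} ↦ x_{i+1}⁻¹ x_i x_{i+1}` (fixing the other generators). -/
theorem exists_rep_aut_free (n : ℕ) (hn : 1 ≤ n) :
    ∃ Φ : VB n →* MulAut (FreeGroup (Fin n)),
      ∀ i : Fin (n - 1),
        (Φ (vζ n i) (FreeGroup.of (finL i)) = FreeGroup.of (finR i) ∧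
         Φ (vζ n i) (FreeGroup.of (finR i)) = FreeGroup.of (finL i) ∧
         ∀ j : Fin n, j ≠ finL i → j ≠ finR i →
           Φ (vζ n i) (FreeGroup.of j) = FreeGroup.of j) ∧
        (Φ (vσ n i) (FreeGroup.of (finL i)) = FreeGroup.of (finR i) ∧
         Φ (vσ n i) (FreeGroup.of (finR i)) =
           (FreeGroup.of (finR i))⁻¹ * FreeGroup.of (finL i) * FreeGroup.of (finR i) ∧
         ∀ j : Fin n, j ≠ finL i → j ≠ finR i →
           Φ (vσ n i) (FreeGroup.of j) = FreeGroup.of j) :=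
  exists_rep_aut_free_general n

end VirtualBraids
end
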